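/- arXiv:2605.16389 — 4 statements merged into one kernel-verified Lean document; each statement's English description precedes it below -/
import Mathlib

section
/- For 0 < α < 1 and any odd natural number N, the weighted partial sum S_2 = ∑_{k=0}^{N} C(α,k) · k² is strictly positive. -/
/-- Generalized binomial coefficient `C(α, k) = α(α−1)⋯(α−k+1)/k!` for real `α`. -/
noncomputable def genBinom (α : ℝ) (k : ℕ) : ℝ :=
  (∏ i ∈ Finset.range k, (α - i)) / (Nat.factorial k)

lemma genBinom_zero (β : ℝ) : genBinom β 0 = 1 := by simp [genBinom]

lemma genBinom_succ (β : ℝ) (k : ℕ) :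
    genBinom β (k + 1) = genBinom β k * (β - k) / (k + 1) := by
  unfold genBinom
  rw [Finset.prod_range_succ, Nat.factorial_succ]
  have h1 : (Nat.factorial k : ℝ) ≠ 0 := Nat.cast_ne_zero.mpr k.factorial_ne_zero
  have h2 : ((k : ℝ) + 1) ≠ 0 := by positivity
  push_cast
  rw [div_mul_eq_mul_div, div_div, mul_comm ((k:ℝ) + 1)]

lemma genBinom_mul_succ (β : ℝ) (k : ℕ) :
    ((k : ℝ) + 1) * genBinom β (k + 1) = β * genBinom (β - 1) k := by
  unfold genBinom
  rw [Finset.prod_range_succ', Nat.factorial_succ]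
  have h1 : (Nat.factorial k : ℝ) ≠ 0 := Nat.cast_ne_zero.mpr k.factorial_ne_zero
  have h2 : ((k : ℝ) + 1) ≠ 0 := by positivity
  have hprod : (∏ i ∈ Finset.range k, (β - ((i : ℕ) + 1 : ℕ))) =
      ∏ i ∈ Finset.range k, ((β - 1) - i) := by
    apply Finset.prod_congr rfl
    intro i _
    push_cast
    ring
  rw [hprod]
  push_cast
  field_simp
  ring

lemma genBinom_sign (β : ℝ) (hβ : β < 0) (k : ℕ) : 0 < (-1 : ℝ) ^ k * genBinom β k := by
  induction k with
  | zero => simp [genBinom_zero]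
  | succ k ih =>
    rw [genBinom_succ]
    have h : (-1 : ℝ) ^ (k + 1) * (genBinom β k * (β - k) / (k + 1)) =
        ((-1 : ℝ) ^ k * genBinom β k) * ((k - β) / (k + 1)) := by ring
    rw [h]
    apply mul_pos ih
    apply div_pos
    · have : (0 : ℝ) ≤ k := Nat.cast_nonneg k
      linarith
    · positivity

lemma genBinom_pair (β : ℝ) (k : ℕ) :
    genBinom β k + genBinom β (k + 1) = genBinom β k * (β + 1) / (k + 1) := by
  rw [genBinom_succ]
  have h2 : ((k : ℝ) + 1) ≠ 0 := by positivity
  field_simp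
  ring

lemma genBinom_even_pos (β : ℝ) (hβ : β < 0) (k : ℕ) : 0 < genBinom β (2 * k) := by
  have h := genBinom_sign β hβ (2 * k)
  have h2 : (-1 : ℝ) ^ (2 * k) = 1 := by rw [pow_mul]; norm_num
  rwa [h2, one_mul] at h

lemma A2_pos {α : ℝ} (h0 : 0 < α) (h1 : α < 1) (t : ℕ) :
    0 < ∑ j ∈ Finset.range (2 * t + 2), genBinom (α - 1) j := by
  have hβ : α - 1 < 0 := by linarith
  induction t with
  | zero =>
    norm_num [Finset.sum_range_succ, genBinom_zero, genBinom_succ]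
    linarith
  | succ t ih =>
    have he : 2 * (t + 1) + 2 = (2 * t + 2) + 1 + 1 := by ring
    rw [he, Finset.sum_range_succ, Finset.sum_range_succ]
    have hp := genBinom_pair (α - 1) (2 * t + 2)
    have hpos : 0 < genBinom (α - 1) (2 * t + 2) := by
      have : 2 * t + 2 = 2 * (t + 1) := by ring
      rw [this]; exact genBinom_even_pos _ hβ _
    have hfac : 0 < genBinom (α - 1) (2 * t + 2) * ((α - 1) + 1) / ((2 * t + 2 : ℕ) + 1) := by
      apply div_pos
      · have : (α - 1) + 1 = α := by ring
        rw [this]; exact mul_pos hpos h0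
      · positivity
    linarith

lemma B2_neg {α : ℝ} (h0 : 0 < α) (h1 : α < 1) (t : ℕ) :
    ∑ j ∈ Finset.range (2 * t + 2), genBinom (α - 2) j < 0 := by
  have hβ : α - 2 < 0 := by linarith
  induction t with
  | zero =>
    norm_num [Finset.sum_range_succ, genBinom_zero, genBinom_succ]
    linarith
  | succ t ih =>
    have he : 2 * (t + 1) + 2 = (2 * t + 2) + 1 + 1 := by ring
    rw [he, Finset.sum_range_succ, Finset.sum_range_succ]
    have hp := genBinom_pair (α - 2) (2 * t + 2)
    have hpos : 0 < genBinom (α - 2) (2 * t + 2) := by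
      have : 2 * t + 2 = 2 * (t + 1) := by ring
      rw [this]; exact genBinom_even_pos _ hβ _
    have hfac : genBinom (α - 2) (2 * t + 2) * ((α - 2) + 1) / ((2 * t + 2 : ℕ) + 1) < 0 := by
      apply div_neg_of_neg_of_pos
      · apply mul_neg_of_pos_of_neg hpos; linarith
      · positivity
    linarith

lemma A_pos_all {α : ℝ} (h0 : 0 < α) (h1 : α < 1) (m : ℕ) :
    0 < ∑ j ∈ Finset.range (2 * m + 1), genBinom (α - 1) j := by
  have hβ : α - 1 < 0 := by linarith
  rw [Finset.sum_range_succ]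
  have hf : 0 < genBinom (α - 1) (2 * m) := genBinom_even_pos _ hβ m
  rcases Nat.eq_zero_or_pos m with rfl | hm
  · simpa using hf
  · obtain ⟨t, rfl⟩ := Nat.exists_eq_add_of_le hm
    have he : 2 * (1 + t) = 2 * t + 2 := by ring
    have := A2_pos h0 h1 t
    rw [he] at hf ⊢
    linarith

lemma B_nonpos_all {α : ℝ} (h0 : 0 < α) (h1 : α < 1) (m : ℕ) :
    ∑ j ∈ Finset.range (2 * m), genBinom (α - 2) j ≤ 0 := by
  rcases Nat.eq_zero_or_pos m with rfl | hm
  · simp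
  · obtain ⟨t, rfl⟩ := Nat.exists_eq_add_of_le hm
    have he : 2 * (1 + t) = 2 * t + 2 := by ring
    rw [he]
    exact le_of_lt (B2_neg h0 h1 t)

/-- For `0 < α < 1` and odd `N`, the weighted partial sum
`S₂ = ∑_{k=0}^{N} C(α,k)·k²` is strictly positive. -/
theorem sq_weighted_partial_binom_sum_pos
    (α : ℝ) (h0 : 0 < α) (h1 : α < 1) (N : ℕ) (hN : Odd N) :
    0 < ∑ k ∈ Finset.range (N + 1), genBinom α k * (k : ℝ) ^ 2 := by
  obtain ⟨m, rfl⟩ := hN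
  rw [Finset.sum_range_succ']
  simp only [Nat.cast_zero, ne_eq, OfNat.ofNat_ne_zero, not_false_eq_true, zero_pow, mul_zero,
    add_zero]
  have hterm : ∀ k : ℕ, genBinom α (k + 1) * ((k + 1 : ℕ) : ℝ) ^ 2 =
      α * (genBinom (α - 1) k * k) + α * genBinom (α - 1) k := by
    intro k
    have h := genBinom_mul_succ α k
    push_cast
    have h2 : genBinom α (k + 1) * ((k : ℝ) + 1) ^ 2 =
        (((k : ℝ) + 1) * genBinom α (k + 1)) * ((k : ℝ) + 1) := by ring
    rw [h2, h]
    ring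
  rw [Finset.sum_congr rfl fun k _ => hterm k, Finset.sum_add_distrib, ← Finset.mul_sum,
    ← Finset.mul_sum]
  have hterm2 : ∀ k : ℕ, genBinom (α - 1) (k + 1) * ((k + 1 : ℕ) : ℝ) =
      (α - 1) * genBinom (α - 2) k := by
    intro k
    have h := genBinom_mul_succ (α - 1) k
    have he : α - 1 - 1 = α - 2 := by ring
    rw [he] at h
    push_cast
    rw [mul_comm]
    exact h
  have hT : ∑ k ∈ Finset.range (2 * m + 1), genBinom (α - 1) k * (k : ℝ) =
      (α - 1) * ∑ k ∈ Finset.range (2 * m), genBinom (α - 2) k := by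
    rw [Finset.sum_range_succ']
    simp only [Nat.cast_zero, mul_zero, add_zero]
    rw [Finset.sum_congr rfl fun k _ => hterm2 k, ← Finset.mul_sum]
  rw [hT]
  have hA := A_pos_all h0 h1 m
  have hB := B_nonpos_all h0 h1 m
  have h2 : 0 ≤ (α - 1) * ∑ k ∈ Finset.range (2 * m), genBinom (α - 2) k := by
    nlinarith
  have h3 : 0 < α * ∑ j ∈ Finset.range (2 * m + 1), genBinom (α - 1) j := mul_pos h0 hA
  nlinarith
end

section
/- For 0 < α < 1 and 0 < θ ≤ π, the series ∑_{k=0}^{∞} (−1)^k C(α,k) cos(kθ) converges absolutely to 2^α · sin^α(θ/2) · cos(α(θ − π)/2). -/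
/-!
Since `∑ |C(α,k)| < ∞` for `0 ≤ α ≤ 1`, the binomial series `∑ C(α,k) z^k` converges on the
closed unit disc, and by Abel's limit theorem its sum there is still `(1 + z)^α` wherever this
power is continuous. At `z = -e^{iθ}` one has `1 + z = 2 sin(θ/2) e^{i(θ - π)/2}`, and the
claimed formula is the real part of `(1 + z)^α`.
-/

open Real

open Finset Complex Filter Topology

lemma genBinom_eq_choose (a : ℝ) (k : ℕ) : genBinom a k = Ring.choose a k := by
  rw [genBinom, Ring.choose_eq_smul, ← Polynomial.aeval_eq_smeval, Polynomial.aeval_def,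
    Polynomial.eval₂_eq_eval_map, descPochhammer_map, descPochhammer_eval_eq_prod_range,
    smul_eq_mul, inv_mul_eq_div]

lemma genBinom_succ_succ (a : ℝ) (k : ℕ) :
    genBinom (a + 1) (k + 1) = genBinom a k + genBinom a (k + 1) := by
  simp only [genBinom_eq_choose, Ring.choose_succ_succ]

lemma neg_one_pow_mul_genBinom (a : ℝ) (k : ℕ) :
    (-1) ^ k * genBinom a k = ∏ i ∈ range k, (i - a) / (i + 1) := by
  rw [genBinom, prod_div_distrib, ← prod_range_add_one_eq_factorial, mul_div_assoc',
    ← card_range k, ← prod_const, card_range, ← prod_mul_distrib]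
  push_cast
  exact congrArg₂ _ (prod_congr rfl fun i _ => by ring) rfl

lemma neg_one_pow_mul_genBinom_nonneg {a : ℝ} (ha : a ≤ 0) (k : ℕ) :
    0 ≤ (-1) ^ k * genBinom a k := by
  rw [neg_one_pow_mul_genBinom]
  exact prod_nonneg fun i _ => div_nonneg (by linarith [i.cast_nonneg (α := ℝ)]) (by positivity)

lemma neg_one_pow_succ_mul_genBinom_succ_nonpos {a : ℝ} (h0 : 0 ≤ a) (h1 : a ≤ 1) (k : ℕ) :
    (-1) ^ (k + 1) * genBinom a (k + 1) ≤ 0 := by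
  rw [neg_one_pow_mul_genBinom, prod_range_succ']
  refine mul_nonpos_of_nonneg_of_nonpos (prod_nonneg fun i _ => div_nonneg ?_ (by positivity))
    (by simpa using h0)
  push_cast
  linarith [i.cast_nonneg (α := ℝ)]

/-- Pascal's rule at `a - 1` makes `|C(a, k + 1)|` telescope. -/
lemma abs_genBinom_succ {a : ℝ} (h0 : 0 ≤ a) (h1 : a ≤ 1) (k : ℕ) :
    |genBinom a (k + 1)| =
      (-1) ^ k * genBinom (a - 1) k - (-1) ^ (k + 1) * genBinom (a - 1) (k + 1) := by
  have pascal := genBinom_succ_succ (a - 1) k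
  rw [sub_add_cancel] at pascal
  calc |genBinom a (k + 1)| = |(-1) ^ (k + 1) * genBinom a (k + 1)| := by simp [abs_mul]
    _ = -((-1) ^ (k + 1) * genBinom a (k + 1)) :=
        abs_of_nonpos (neg_one_pow_succ_mul_genBinom_succ_nonpos h0 h1 k)
    _ = _ := by rw [pascal]; ring

lemma summable_abs_genBinom {a : ℝ} (h0 : 0 ≤ a) (h1 : a ≤ 1) :
    Summable fun k => |genBinom a k| := by
  set b : ℕ → ℝ := fun k => (-1) ^ k * genBinom (a - 1) k
  refine (summable_nat_add_iff 1).mp (summable_of_sum_range_le (c := 1) (fun _ => abs_nonneg _)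
    fun n => ?_)
  have hb : 0 ≤ b n := neg_one_pow_mul_genBinom_nonneg (by linarith) n
  have hb0 : b 0 = 1 := by simp [b, genBinom]
  calc ∑ k ∈ range n, |genBinom a (k + 1)| = b 0 - b n := by
        rw [← sum_range_sub']; exact sum_congr rfl fun k _ => abs_genBinom_succ h0 h1 k
    _ ≤ 1 := by linarith

theorem Complex.tsum_choose_mul_pow_eq_one_add_cpow {a z : ℂ} (hz : ‖z‖ ≤ 1)
    (hslit : 1 + z ∈ slitPlane) (h : Summable fun n => Ring.choose a n * z ^ n) :
    ∑' n, Ring.choose a n * z ^ n = (1 + z) ^ a := by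
  have abel := tendsto_map'_iff.mp
    (Complex.tendsto_tsum_powerSeries_nhdsWithin_lt h.hasSum.tendsto_sum_nat)
  have hcont : Tendsto (fun r : ℝ => (1 + r * z) ^ a) (𝓝[<] 1) (𝓝 ((1 + z) ^ a)) := by
    refine tendsto_nhdsWithin_of_tendsto_nhds ?_
    have : ContinuousAt (fun r : ℝ => (1 + r * z) ^ a) 1 :=
      (continuousAt_cpow_const (by simpa using hslit)).comp (by fun_prop)
    simpa using this.tendsto
  refine tendsto_nhds_unique abel (hcont.congr' ?_)
  filter_upwards [Ioo_mem_nhdsLT zero_lt_one] with r hr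
  have hrz : (r : ℂ) * z ∈ Metric.eball (0 : ℂ) 1 := by
    rw [← ENNReal.ofReal_one, Metric.eball_ofReal, mem_ball_zero_iff, norm_mul, norm_real,
      Real.norm_of_nonneg hr.1.le]
    exact (mul_le_of_le_one_right hr.1.le hz).trans_lt hr.2
  have hseries := (one_add_cpow_hasFPowerSeriesOnBall_zero (a := a)).hasSum hrz
  simp only [binomialSeries_apply, zero_add, List.ofFn_const, List.prod_replicate,
    smul_eq_mul] at hseries
  rw [← hseries.tsum_eq]
  exact tsum_congr fun n => by ring

lemma one_sub_exp_mul_I (θ : ℝ) :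
    1 - exp (θ * I) = (2 * Real.sin (θ / 2) : ℝ) * exp (((θ - π) / 2 : ℝ) * I) := by
  have hθ : θ = 2 * (θ / 2) := by ring
  have hψ : (θ - π) / 2 = θ / 2 - π / 2 := by ring
  apply Complex.ext <;>
    simp only [sub_re, sub_im, one_re, one_im, re_ofReal_mul, im_ofReal_mul, exp_ofReal_mul_I_re,
      exp_ofReal_mul_I_im, hψ, Real.cos_sub_pi_div_two, Real.sin_sub_pi_div_two]
  · conv_lhs => rw [hθ, Real.cos_two_mul]
    linear_combination -2 * Real.sin_sq_add_cos_sq (θ / 2)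
  · conv_lhs => rw [hθ, Real.sin_two_mul]
    ring

lemma sin_half_pos_of_lt_two_pi {θ : ℝ} (h0 : 0 < θ) (h2π : θ < 2 * π) :
    0 < Real.sin (θ / 2) :=
  Real.sin_pos_of_pos_of_lt_pi (by positivity) (by linarith)

lemma norm_one_sub_exp_mul_I {θ : ℝ} (h0 : 0 < θ) (h2π : θ < 2 * π) :
    ‖1 - exp (θ * I)‖ = 2 * Real.sin (θ / 2) := by
  rw [one_sub_exp_mul_I, norm_mul, norm_exp_ofReal_mul_I, mul_one, norm_real,
    Real.norm_of_nonneg (by linarith [sin_half_pos_of_lt_two_pi h0 h2π])]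

lemma arg_one_sub_exp_mul_I {θ : ℝ} (h0 : 0 < θ) (h2π : θ < 2 * π) :
    arg (1 - exp (θ * I)) = (θ - π) / 2 := by
  rw [one_sub_exp_mul_I, arg_real_mul _ (by linarith [sin_half_pos_of_lt_two_pi h0 h2π]),
    arg_exp_mul_I, toIocMod_eq_self]
  constructor <;> linarith [pi_pos]

lemma one_sub_exp_mul_I_mem_slitPlane {θ : ℝ} (h0 : 0 < θ) (h2π : θ < 2 * π) :
    1 - exp (θ * I) ∈ slitPlane := by
  rw [mem_slitPlane_iff_arg, arg_one_sub_exp_mul_I h0 h2π, ← norm_ne_zero_iff,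
    norm_one_sub_exp_mul_I h0 h2π]
  constructor <;> linarith [sin_half_pos_of_lt_two_pi h0 h2π]

lemma re_one_sub_exp_mul_I_cpow {θ : ℝ} (h0 : 0 < θ) (h2π : θ < 2 * π) (α : ℝ) :
    ((1 - exp (θ * I)) ^ (α : ℂ)).re
      = 2 ^ α * Real.sin (θ / 2) ^ α * Real.cos (α * (θ - π) / 2) := by
  rw [cpow_ofReal_re, norm_one_sub_exp_mul_I h0 h2π, arg_one_sub_exp_mul_I h0 h2π,
    mul_rpow zero_le_two (sin_half_pos_of_lt_two_pi h0 h2π).le]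
  ring_nf

lemma re_ofReal_mul_neg_exp_mul_I_pow (c θ : ℝ) (k : ℕ) :
    ((c : ℂ) * (-exp (θ * I)) ^ k).re = (-1) ^ k * c * Real.cos (k * θ) := by
  have : (c : ℂ) * (-exp (θ * I)) ^ k = ((-1) ^ k * c : ℝ) * exp ((k * θ : ℝ) * I) := by
    rw [neg_pow, ← Complex.exp_nat_mul]
    push_cast
    ring_nf
  rw [this, re_ofReal_mul, exp_ofReal_mul_I_re]

/-- For `0 < α < 1` and `0 < θ ≤ π`, the series `∑_{k=0}^∞ (−1)^k C(α,k) cos(kθ)`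
converges absolutely to `2^α · sin^α(θ/2) · cos(α(θ − π)/2)`. -/
theorem alternating_binom_cos_series
    (α θ : ℝ) (h0 : 0 < α) (h1 : α < 1) (hθ0 : 0 < θ) (hθπ : θ ≤ π) :
    (Summable fun k : ℕ => |(-1 : ℝ) ^ k * genBinom α k * Real.cos (k * θ)|) ∧
    ∑' k : ℕ, (-1 : ℝ) ^ k * genBinom α k * Real.cos (k * θ)
      = (2 : ℝ) ^ α * Real.sin (θ / 2) ^ α * Real.cos (α * (θ - π) / 2) := by
  have habs := summable_abs_genBinom h0.le h1.le
  have h2π : θ < 2 * π := by linarith [pi_pos]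
  have hchoose (k : ℕ) : Ring.choose (α : ℂ) k = genBinom α k := by
    rw [genBinom_eq_choose, ofReal_choose]
  set z : ℂ := -exp (θ * I)
  have hz : ‖z‖ = 1 := by simp [z]
  have hsum : Summable fun k : ℕ => Ring.choose (α : ℂ) k * z ^ k :=
    habs.of_norm_bounded fun k => by simp [hchoose, hz]
  refine ⟨habs.of_nonneg_of_le (fun _ => abs_nonneg _) fun k => ?_, ?_⟩
  · simpa [abs_mul] using mul_le_of_le_one_right (abs_nonneg _) (abs_cos_le_one (k * θ))
  calc ∑' k : ℕ, (-1 : ℝ) ^ k * genBinom α k * Real.cos (k * θ)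
      = (∑' k : ℕ, Ring.choose (α : ℂ) k * z ^ k).re := by
        rw [re_tsum hsum]
        simp only [hchoose, z, re_ofReal_mul_neg_exp_mul_I_pow]
    _ = ((1 - exp (θ * I)) ^ (α : ℂ)).re := by
        rw [tsum_choose_mul_pow_eq_one_add_cpow hz.le
          (one_sub_exp_mul_I_mem_slitPlane hθ0 h2π) hsum, ← sub_eq_add_neg]
    _ = _ := re_one_sub_exp_mul_I_cpow hθ0 h2π α
end

section
/- Let K > 0, B > 0, and 0 < α < 1. The function g(ω) = B·K·(K·cos(πα/2)·ω^α + B·ω^{2α}) / (B²·ω^{2α} + 2·B·K·cos(πα/2)·ω^α + K²) is strictly monotonically increasing on (0, ∞). -/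
open Real

/-- For `K > 0`, `B > 0`, `0 < α < 1`, the real part of the continuous-time
frequency response of the fractional Maxwell model,
`g(ω) = B·K·(K·cos(πα/2)·ω^α + B·ω^{2α}) /
        (B²·ω^{2α} + 2·B·K·cos(πα/2)·ω^α + K²)`,
is strictly monotonically increasing on `(0, ∞)`. -/
theorem fractional_maxwell_real_part_strictMonoOn
    (K B α : ℝ) (hK : 0 < K) (hB : 0 < B) (h0 : 0 < α) (h1 : α < 1) :
    StrictMonoOn
      (fun ω : ℝ =>
        B * K * (K * Real.cos (π * α / 2) * ω ^ α + B * ω ^ (2 * α)) /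
          (B ^ 2 * ω ^ (2 * α) + 2 * B * K * Real.cos (π * α / 2) * ω ^ α + K ^ 2))
      (Set.Ioi 0) := by
  intro x hx y hy hxy
  simp only [Set.mem_Ioi] at hx hy
  set c := Real.cos (π * α / 2) with hc_def
  have hc : 0 < c := by
    apply Real.cos_pos_of_mem_Ioo
    constructor
    · have : 0 < π * α / 2 := by positivity
      linarith [Real.pi_pos]
    · have : π * α / 2 < π / 2 := by
        have := Real.pi_pos
        nlinarith
      linarith
  have hux : (0:ℝ) < x ^ α := Real.rpow_pos_of_pos hx α
  have huy : (0:ℝ) < y ^ α := Real.rpow_pos_of_pos hy α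
  have huv : x ^ α < y ^ α := Real.rpow_lt_rpow hx.le hxy h0
  have h2x : x ^ (2 * α) = (x ^ α) ^ 2 := by
    rw [mul_comm, Real.rpow_mul hx.le]
    norm_num [Real.rpow_two]
  have h2y : y ^ (2 * α) = (y ^ α) ^ 2 := by
    rw [mul_comm, Real.rpow_mul hy.le]
    norm_num [Real.rpow_two]
  set u := x ^ α
  set v := y ^ α
  simp only [h2x, h2y]
  have hdx : 0 < B ^ 2 * u ^ 2 + 2 * B * K * c * u + K ^ 2 := by positivity
  have hdy : 0 < B ^ 2 * v ^ 2 + 2 * B * K * c * v + K ^ 2 := by positivity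
  rw [div_lt_div_iff₀ hdx hdy]
  have key :
      B * K * (K * c * v + B * v ^ 2) * (B ^ 2 * u ^ 2 + 2 * B * K * c * u + K ^ 2) -
        B * K * (K * c * u + B * u ^ 2) * (B ^ 2 * v ^ 2 + 2 * B * K * c * v + K ^ 2) =
      K * (B * v - B * u) *
        (K * c * (B * u) * (B * v) + K ^ 2 * (B * u + B * v) + K * c * K ^ 2) := by
    ring
  nlinarith [mul_pos (mul_pos hK (by nlinarith : (0:ℝ) < B * v - B * u))
    (by positivity : (0:ℝ) < K * c * (B * u) * (B * v) + K ^ 2 * (B * u + B * v) + K * c * K ^ 2)]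
end

section
/- Let K > 0, B > 0, T > 0, and 0 < α < 1. The function h(ω) = [sin(ωT)/(cos(ωT) − 1)] · [B·K²·ω^α·sin(πα/2) / (B²·ω^{2α} + 2·B·K·cos(πα/2)·ω^α + K²)] is strictly monotonically increasing on the interval (0, π/T]. -/
/-!
Write `x = ωT ∈ (0, π]`. Since `sin x / (cos x - 1) = -sin x / (1 - cos x)`, the function equals
`-(φ(ωT) · ω ^ (α - 1) · q(ω))` with `φ(x) = x sin x / (1 - cos x)` and
`q(ω) = B K² sin(πα/2) / (T (B² ω^{2α} + 2 B K cos(πα/2) ω^α + K²))`.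
All three factors are nonnegative and antitone on `(0, π/T]`: `φ` strictly so, because
`φ'(x) = (sin x - x) / (1 - cos x) < 0`; the power because `α ≤ 1`; and `q` because
`cos(πα/2) ≥ 0` makes its denominator increasing in `ω`.
-/

open Real Set

theorem StrictAntiOn.mul_antitoneOn {α M₀ : Type*} [Preorder α] [MonoidWithZero M₀]
    [PartialOrder M₀] [PosMulMono M₀] [MulPosStrictMono M₀] {f g : α → M₀} {s : Set α}
    (hf : StrictAntiOn f s) (hg : AntitoneOn g s) (hf₀ : ∀ x ∈ s, 0 ≤ f x)
    (hg₀ : ∀ x ∈ s, 0 < g x) : StrictAntiOn (f * g) s :=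
  fun _ ha _ hb h ↦ mul_lt_mul (hf ha hb h) (hg ha hb h.le) (hg₀ _ hb) (hf₀ _ ha)

namespace Real

theorem cos_lt_one_of_mem_Ioc {x : ℝ} (hx : x ∈ Ioc 0 π) : cos x < 1 := by
  simpa using cos_lt_cos_of_nonneg_of_le_pi le_rfl hx.2 hx.1

theorem hasDerivAt_mul_sin_div_one_sub_cos {x : ℝ} (hx : cos x ≠ 1) :
    HasDerivAt (fun x ↦ x * sin x / (1 - cos x)) ((sin x - x) / (1 - cos x)) x := by
  have hx' : 1 - cos x ≠ 0 := sub_ne_zero.2 hx.symm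
  refine (((hasDerivAt_id' x).mul (hasDerivAt_sin x)).div
    ((hasDerivAt_const x 1).sub (hasDerivAt_cos x)) hx').congr_deriv ?_
  simp only [Pi.sub_apply, Pi.mul_apply]
  field_simp
  linear_combination -x * sin_sq_add_cos_sq x

theorem strictAntiOn_mul_sin_div_one_sub_cos :
    StrictAntiOn (fun x ↦ x * sin x / (1 - cos x)) (Ioc 0 π) := by
  refine strictAntiOn_of_deriv_neg (convex_Ioc 0 π) (fun x hx ↦ ?_) fun x hx ↦ ?_
  · exact (hasDerivAt_mul_sin_div_one_sub_cos (cos_lt_one_of_mem_Ioc hx).ne).continuousAt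
      |>.continuousWithinAt
  · rw [interior_Ioc] at hx
    have hcos := cos_lt_one_of_mem_Ioc (Ioo_subset_Ioc_self hx)
    rw [(hasDerivAt_mul_sin_div_one_sub_cos hcos.ne).deriv]
    exact div_neg_of_neg_of_pos (by linarith [sin_lt hx.1]) (by linarith)

theorem mul_sin_div_one_sub_cos_nonneg {x : ℝ} (hx : x ∈ Icc 0 π) :
    0 ≤ x * sin x / (1 - cos x) :=
  div_nonneg (mul_nonneg hx.1 (sin_nonneg_of_nonneg_of_le_pi hx.1 hx.2))
    (by linarith [cos_le_one x])

theorem antitoneOn_div_quadratic_rpow {a b c C β : ℝ} (ha : 0 ≤ a) (hb : 0 ≤ b) (hc : 0 < c)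
    (hC : 0 ≤ C) (hβ : 0 ≤ β) :
    AntitoneOn (fun x ↦ C / (a * x ^ (2 * β) + b * x ^ β + c)) (Ioi 0) := by
  intro x hx y _ hxy
  have := hx.out
  dsimp only
  gcongr

end Real

/-- For `K > 0`, `B > 0`, `T > 0`, `0 < α < 1`, the function
`h(ω) = [sin(ωT)/(cos(ωT) − 1)] ·
        [B·K²·ω^α·sin(πα/2) / (B²·ω^{2α} + 2·B·K·cos(πα/2)·ω^α + K²)]`
is strictly monotonically increasing on `(0, π/T]`. -/
theorem fractional_maxwell_imag_part_strictMonoOn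
    (K B T α : ℝ) (hK : 0 < K) (hB : 0 < B) (hT : 0 < T) (h0 : 0 < α) (h1 : α < 1) :
    StrictMonoOn
      (fun ω : ℝ =>
        (Real.sin (ω * T) / (Real.cos (ω * T) - 1)) *
          (B * K ^ 2 * ω ^ α * Real.sin (π * α / 2) /
            (B ^ 2 * ω ^ (2 * α) + 2 * B * K * Real.cos (π * α / 2) * ω ^ α + K ^ 2)))
      (Set.Ioc 0 (π / T)) := by
  have hs : 0 < sin (π * α / 2) := sin_pos_of_pos_of_lt_pi (by positivity) (by nlinarith [pi_pos])
  have hc : 0 ≤ cos (π * α / 2) := cos_nonneg_of_mem_Icc ⟨by nlinarith [pi_pos], by nlinarith [pi_pos]⟩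
  have hmaps : MapsTo (· * T) (Ioc 0 (π / T)) (Ioc 0 π) := fun ω hω ↦
    ⟨mul_pos hω.1 hT, (le_div_iff₀ hT).1 hω.2⟩
  have hφ : StrictAntiOn (fun ω ↦ ω * T * sin (ω * T) / (1 - cos (ω * T))) (Ioc 0 (π / T)) :=
    strictAntiOn_mul_sin_div_one_sub_cos.comp_strictMonoOn
      ((strictMono_mul_right_of_pos hT).strictMonoOn _) hmaps
  have hφ₀ : ∀ ω ∈ Ioc 0 (π / T), 0 ≤ ω * T * sin (ω * T) / (1 - cos (ω * T)) :=
    fun ω hω ↦ mul_sin_div_one_sub_cos_nonneg (Ioc_subset_Icc_self (hmaps hω))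
  have hpow : AntitoneOn (fun ω : ℝ ↦ ω ^ (α - 1)) (Ioc 0 (π / T)) :=
    (antitoneOn_rpow_Ioi_of_exponent_nonpos (by linarith)).mono Ioc_subset_Ioi_self
  have hpow₀ : ∀ ω ∈ Ioc 0 (π / T), 0 < ω ^ (α - 1) := fun ω hω ↦ rpow_pos_of_pos hω.1 _
  have hq : AntitoneOn (fun ω ↦ B * K ^ 2 * sin (π * α / 2) / T /
      (B ^ 2 * ω ^ (2 * α) + 2 * B * K * cos (π * α / 2) * ω ^ α + K ^ 2)) (Ioc 0 (π / T)) :=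
    (antitoneOn_div_quadratic_rpow (sq_nonneg B) (by positivity) (by positivity) (by positivity)
      h0.le).mono Ioc_subset_Ioi_self
  have hq₀ : ∀ ω ∈ Ioc 0 (π / T), 0 < B * K ^ 2 * sin (π * α / 2) / T /
      (B ^ 2 * ω ^ (2 * α) + 2 * B * K * cos (π * α / 2) * ω ^ α + K ^ 2) := fun ω hω ↦ by
    have := hω.1
    positivity
  refine (((hφ.mul_antitoneOn hpow hφ₀ hpow₀).mul_antitoneOn hq
    (fun ω hω ↦ mul_nonneg (hφ₀ ω hω) (hpow₀ ω hω).le) hq₀).neg).congr fun ω hω ↦ ?_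
  have hω₀ : ω ≠ 0 := hω.1.ne'
  have hcos : cos (ω * T) - 1 ≠ 0 := sub_ne_zero.2 (cos_lt_one_of_mem_Ioc (hmaps hω)).ne
  simp only [Pi.mul_apply]
  rw [rpow_sub_one hω₀, ← neg_sub (cos (ω * T)), div_neg]
  field_simp
end
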